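/- The Fock space of semi-infinite forms is an irreducible module over the infinite Clifford algebra: every nonzero ℂ-subspace of F that is invariant under all creation operators v_a and all annihilation operators w_a (a ∈ H) equals F. -/

import Mathlib

open scoped Classical

/-- The set of half-integers `H = ℤ + 1/2`. -/
def HalfInt : Set ℚ := {q | ∃ n : ℤ, q = (n : ℚ) + 1/2}

/-- The negative half-integers `H⁻`. -/
def Hneg : Set ℚ := {q | q ∈ HalfInt ∧ q < 0}

/-- The positive half-integers `H⁺`. -/
def Hpos : Set ℚ := {q | q ∈ HalfInt ∧ 0 < q}

/-- A Maya diagram: a set of half-integers whose symmetric difference with `H⁻` is finite. -/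
structure Maya where
  carrier : Set ℚ
  subset_halfInt : carrier ⊆ HalfInt
  finite_symmDiff : (symmDiff carrier Hneg).Finite

/-- The Fock space of semi-infinite forms: the free ℂ-vector space on Maya diagrams. -/
abbrev Fock : Type := Maya →₀ ℂ

lemma symmDiff_insert_subset (a : ℚ) (S T : Set ℚ) :
    symmDiff (insert a S) T ⊆ insert a (symmDiff S T) := by
  intro x hx
  simp only [Set.mem_symmDiff, Set.mem_insert_iff] at *
  tauto

lemma symmDiff_diff_subset (a : ℚ) (S T : Set ℚ) :
    symmDiff (S \ {a}) T ⊆ insert a (symmDiff S T) := by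
  intro x hx
  simp only [Set.mem_symmDiff, Set.mem_insert_iff, Set.mem_diff,
    Set.mem_singleton_iff] at *
  tauto

/-- Adding a half-integer to a Maya diagram. -/
def Maya.insertCell (M : Maya) (a : ℚ) (ha : a ∈ HalfInt) : Maya where
  carrier := insert a M.carrier
  subset_halfInt := by
    intro x hx
    rcases hx with rfl | hx
    · exact ha
    · exact M.subset_halfInt hx
  finite_symmDiff :=
    Set.Finite.subset (M.finite_symmDiff.insert a) (symmDiff_insert_subset a _ _)

/-- Removing a half-integer from a Maya diagram. -/
def Maya.eraseCell (M : Maya) (a : ℚ) : Maya where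
  carrier := M.carrier \ {a}
  subset_halfInt := fun _ hx => M.subset_halfInt hx.1
  finite_symmDiff :=
    Set.Finite.subset (M.finite_symmDiff.insert a) (symmDiff_diff_subset a _ _)

/-- The sign `(-1)^{#{x ∈ S : x > a}}`. -/
noncomputable def sgn (S : Set ℚ) (a : ℚ) : ℂ := (-1) ^ (S ∩ Set.Ioi a).ncard

/-- The creation operator `v_a` (exterior multiplication by `v_a`). -/
noncomputable def creation (a : ↥HalfInt) : Fock →ₗ[ℂ] Fock :=
  Finsupp.lift Fock ℂ Maya fun M =>
    if (a : ℚ) ∈ M.carrier then 0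
    else sgn M.carrier a • Finsupp.single (M.insertCell a a.2) 1

/-- The annihilation operator `w_a` (contraction by `w_a`). -/
noncomputable def annihilation (a : ↥HalfInt) : Fock →ₗ[ℂ] Fock :=
  Finsupp.lift Fock ℂ Maya fun M =>
    if (a : ℚ) ∈ M.carrier then sgn M.carrier a • Finsupp.single (M.eraseCell a) 1
    else 0
/-! `v_a w_a` and `w_a v_a` are the projections onto the span of the `e_M` with `a ∈ M`, resp.
`a ∉ M`, so an invariant subspace is stable under all of them. The finitely many diagrams in the
support of a nonzero vector are told apart by finitely many cells, so these projections cut the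
vector down to a multiple of a single `e_M`. From `e_M` the operators `v_a`, `w_a` then reach every
`e_N` up to sign, adding or removing the cells of the finite set `M ∆ N` one at a time. -/

theorem Maya.ext {M N : Maya} (h : M.carrier = N.carrier) : M = N := by
  cases M; cases N; simp_all

theorem Maya.finite_symmDiff_carrier (M N : Maya) : (symmDiff M.carrier N.carrier).Finite :=
  (M.finite_symmDiff.union N.finite_symmDiff).subset fun x hx => by
    simp only [Set.mem_symmDiff, Set.mem_union] at *
    tauto

theorem Maya.mem_halfInt_of_mem_symmDiff {M N : Maya} {a : ℚ}
    (h : a ∈ symmDiff M.carrier N.carrier) : a ∈ HalfInt := by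
  rcases h with ⟨h, _⟩ | ⟨h, _⟩
  exacts [M.subset_halfInt h, N.subset_halfInt h]

theorem Maya.insertCell_eraseCell {M : Maya} {a : ℚ} (ha : a ∈ HalfInt) (h : a ∈ M.carrier) :
    (M.eraseCell a).insertCell a ha = M :=
  Maya.ext <| by simp [Maya.insertCell, Maya.eraseCell, Set.insert_eq_of_mem h]

theorem Maya.eraseCell_insertCell {M : Maya} {a : ℚ} (ha : a ∈ HalfInt) (h : a ∉ M.carrier) :
    (M.insertCell a ha).eraseCell a = M :=
  Maya.ext <| by simp [Maya.insertCell, Maya.eraseCell, Set.insert_sdiff_self_of_notMem h]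

theorem sgn_ne_zero (S : Set ℚ) (a : ℚ) : sgn S a ≠ 0 :=
  pow_ne_zero _ (neg_ne_zero.2 one_ne_zero)

theorem sgn_mul_self (S : Set ℚ) (a : ℚ) : sgn S a * sgn S a = 1 := by
  rw [sgn, ← mul_pow]
  norm_num

theorem sgn_insert_self (S : Set ℚ) (a : ℚ) : sgn (insert a S) a = sgn S a := by
  rw [sgn, sgn, Set.insert_inter_of_notMem Set.self_notMem_Ioi]

theorem sgn_sdiff_singleton_self (S : Set ℚ) (a : ℚ) : sgn (S \ {a}) a = sgn S a := by
  rw [sgn, sgn, ← Set.inter_sdiff_right_comm,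
    Set.sdiff_singleton_eq_self fun h => lt_irrefl a h.2]

section BasisVectors

variable (a : ↥HalfInt) {M : Maya} (c : ℂ)

theorem creation_single_of_mem (h : (a : ℚ) ∈ M.carrier) :
    creation a (Finsupp.single M c) = 0 := by
  simp [creation, h]

theorem creation_single_of_notMem (h : (a : ℚ) ∉ M.carrier) :
    creation a (Finsupp.single M c) =
      Finsupp.single (M.insertCell a a.2) (c * sgn M.carrier a) := by
  simp [creation, h, Finsupp.smul_single]

theorem annihilation_single_of_mem (h : (a : ℚ) ∈ M.carrier) :
    annihilation a (Finsupp.single M c) =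
      Finsupp.single (M.eraseCell a) (c * sgn M.carrier a) := by
  simp [annihilation, h, Finsupp.smul_single]

theorem annihilation_single_of_notMem (h : (a : ℚ) ∉ M.carrier) :
    annihilation a (Finsupp.single M c) = 0 := by
  simp [annihilation, h]

end BasisVectors

theorem creation_annihilation (a : ↥HalfInt) (x : Fock) :
    creation a (annihilation a x) = x.filter fun K => (a : ℚ) ∈ K.carrier := by
  induction x using Finsupp.induction_linear with
  | zero => rw [map_zero, map_zero, Finsupp.filter_zero]
  | add x y hx hy => rw [map_add, map_add, Finsupp.filter_add, hx, hy]
  | single M c =>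
    by_cases h : (a : ℚ) ∈ M.carrier
    · have h' : (a : ℚ) ∉ (M.eraseCell a).carrier := by simp [Maya.eraseCell]
      rw [annihilation_single_of_mem a c h, creation_single_of_notMem a _ h',
        Maya.insertCell_eraseCell a.2 h, Finsupp.filter_single_of_pos _ (a := M) h]
      simp [Maya.eraseCell, sgn_sdiff_singleton_self, mul_assoc, sgn_mul_self]
    · rw [annihilation_single_of_notMem a c h, map_zero,
        Finsupp.filter_single_of_neg _ (a := M) h]

theorem annihilation_creation (a : ↥HalfInt) (x : Fock) :
    annihilation a (creation a x) = x.filter fun K => (a : ℚ) ∉ K.carrier := by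
  induction x using Finsupp.induction_linear with
  | zero => rw [map_zero, map_zero, Finsupp.filter_zero]
  | add x y hx hy => rw [map_add, map_add, Finsupp.filter_add, hx, hy]
  | single M c =>
    by_cases h : (a : ℚ) ∈ M.carrier
    · rw [creation_single_of_mem a c h, map_zero,
        Finsupp.filter_single_of_neg _ (a := M) (not_not_intro h)]
    · have h' : (a : ℚ) ∈ (M.insertCell a a.2).carrier := by simp [Maya.insertCell]
      rw [creation_single_of_notMem a c h, annihilation_single_of_mem a _ h',
        Maya.eraseCell_insertCell a.2 h, Finsupp.filter_single_of_pos _ (a := M) h]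
      simp [Maya.insertCell, sgn_insert_self, mul_assoc, sgn_mul_self]

theorem Maya.eq_of_forall_mem_symmDiff_iff {M N : Maya}
    (h : ∀ a ∈ symmDiff M.carrier N.carrier, a ∈ M.carrier ↔ a ∈ N.carrier) : M = N :=
  Maya.ext <| symmDiff_eq_bot.1 <| Set.eq_empty_of_forall_notMem fun a ha => by
    rcases ha with ⟨hM, hN⟩ | ⟨hN, hM⟩
    exacts [hN ((h a (Or.inl ⟨hM, hN⟩)).1 hM), hM ((h a (Or.inr ⟨hN, hM⟩)).2 hN)]

theorem single_one_mem_of_single_sgn_mem {p : Submodule ℂ Fock} {N : Maya} {S : Set ℚ} {a : ℚ}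
    (h : Finsupp.single N (sgn S a) ∈ p) : Finsupp.single N 1 ∈ p := by
  rwa [← mul_one (sgn S a), ← Finsupp.smul_single', p.smul_mem_iff (sgn_ne_zero S a)] at h

structure IsCliffordInvariant (p : Submodule ℂ Fock) : Prop where
  creation_mem : ∀ (a : ↥HalfInt) (x : Fock), x ∈ p → creation a x ∈ p
  annihilation_mem : ∀ (a : ↥HalfInt) (x : Fock), x ∈ p → annihilation a x ∈ p

namespace IsCliffordInvariant

variable {p : Submodule ℂ Fock} {x : Fock}

theorem filter_agreeAt_mem (hp : IsCliffordInvariant p) (M : Maya) (a : ↥HalfInt)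
    (hx : x ∈ p) :
    x.filter (fun K => (a : ℚ) ∈ K.carrier ↔ (a : ℚ) ∈ M.carrier) ∈ p := by
  by_cases h : (a : ℚ) ∈ M.carrier
  · simp only [h, iff_true]
    exact creation_annihilation a x ▸ hp.creation_mem a _ (hp.annihilation_mem a x hx)
  · simp only [h, iff_false]
    exact annihilation_creation a x ▸ hp.annihilation_mem a _ (hp.creation_mem a x hx)

theorem filter_agreeOn_mem (hp : IsCliffordInvariant p) (M : Maya) (S : Finset ℚ)
    (hS : ∀ a ∈ S, a ∈ HalfInt) (hx : x ∈ p) :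
    x.filter (fun K => ∀ a ∈ S, a ∈ K.carrier ↔ a ∈ M.carrier) ∈ p := by
  induction S using Finset.induction_on with
  | empty => rwa [(Finsupp.filter_eq_self_iff _ x).2 (by simp)]
  | insert b S _ ih =>
    have hfilter : x.filter (fun K => ∀ a ∈ insert b S, a ∈ K.carrier ↔ a ∈ M.carrier) =
        (x.filter fun K => ∀ a ∈ S, a ∈ K.carrier ↔ a ∈ M.carrier).filter
          fun K => b ∈ K.carrier ↔ b ∈ M.carrier := by
      ext K
      simp only [Finsupp.filter_apply, Finset.forall_mem_insert]
      split_ifs <;> tauto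
    rw [hfilter]
    exact hp.filter_agreeAt_mem M ⟨b, hS b (Finset.mem_insert_self b S)⟩
      (ih fun a ha => hS a (Finset.mem_insert_of_mem ha))

theorem exists_single_mem (hp : IsCliffordInvariant p) (hx : x ∈ p) (hx₀ : x ≠ 0) :
    ∃ M : Maya, Finsupp.single M 1 ∈ p := by
  obtain ⟨M, hM⟩ := Finsupp.support_nonempty_iff.2 hx₀
  let S := x.support.biUnion fun N => (M.finite_symmDiff_carrier N).toFinset
  have hS : ∀ a ∈ S, a ∈ HalfInt := fun a ha => by
    obtain ⟨N, -, haN⟩ := Finset.mem_biUnion.1 ha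
    exact Maya.mem_halfInt_of_mem_symmDiff ((Set.Finite.mem_toFinset _).1 haN)
  have hfilter : x.filter (fun K => ∀ a ∈ S, a ∈ K.carrier ↔ a ∈ M.carrier) =
      Finsupp.single M (x M) := by
    ext K
    rw [Finsupp.filter_apply, Finsupp.single_apply]
    rcases eq_or_ne M K with rfl | hMK
    · simp
    · rw [if_neg hMK, ite_eq_right_iff]
      refine fun hagree => by_contra fun hK => hMK ?_
      exact Maya.eq_of_forall_mem_symmDiff_iff fun a ha => (hagree a (Finset.mem_biUnion.2
        ⟨K, Finsupp.mem_support_iff.2 hK, (Set.Finite.mem_toFinset _).2 ha⟩)).symm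
  refine ⟨M, (p.smul_mem_iff (Finsupp.mem_support_iff.1 hM)).1 ?_⟩
  rw [Finsupp.smul_single, smul_eq_mul, mul_one, ← hfilter]
  exact hp.filter_agreeOn_mem M S hS hx

theorem exists_single_symmDiff_singleton_mem (hp : IsCliffordInvariant p) {M : Maya}
    (hM : Finsupp.single M 1 ∈ p) (a : ↥HalfInt) :
    ∃ M' : Maya, M'.carrier = symmDiff M.carrier {(a : ℚ)} ∧ Finsupp.single M' 1 ∈ p := by
  by_cases h : (a : ℚ) ∈ M.carrier
  · refine ⟨M.eraseCell a, (symmDiff_of_ge (Set.singleton_subset_iff.2 h)).symm, ?_⟩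
    refine single_one_mem_of_single_sgn_mem (S := M.carrier) (a := a) ?_
    simpa only [annihilation_single_of_mem a 1 h, one_mul] using hp.annihilation_mem a _ hM
  · refine ⟨M.insertCell a a.2,
      ((Set.disjoint_singleton_right.2 h).symmDiff_eq_sup.trans Set.union_singleton).symm, ?_⟩
    refine single_one_mem_of_single_sgn_mem (S := M.carrier) (a := a) ?_
    simpa only [creation_single_of_notMem a 1 h, one_mul] using hp.creation_mem a _ hM

theorem single_mem_of_single_mem (hp : IsCliffordInvariant p) {M : Maya}
    (hM : Finsupp.single M 1 ∈ p) (N : Maya) : Finsupp.single N 1 ∈ p := by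
  induction hn : (symmDiff M.carrier N.carrier).ncard generalizing M with
  | zero =>
    rwa [← Maya.ext (symmDiff_eq_bot.1
      ((Set.ncard_eq_zero (M.finite_symmDiff_carrier N)).1 hn))]
  | succ n ih =>
    obtain ⟨a, ha⟩ := Set.nonempty_of_ncard_ne_zero (hn.trans_ne n.succ_ne_zero)
    obtain ⟨M', hM'carrier, hM'⟩ :=
      hp.exists_single_symmDiff_singleton_mem hM ⟨a, Maya.mem_halfInt_of_mem_symmDiff ha⟩
    refine ih hM' ?_
    rw [hM'carrier, symmDiff_right_comm, symmDiff_of_ge (Set.singleton_subset_iff.2 ha),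
      Set.ncard_sdiff_singleton_of_mem ha, hn, Nat.add_sub_cancel]

end IsCliffordInvariant

/-- the Fock space of semi-infinite forms is an irreducible module
over the infinite Clifford algebra: every nonzero ℂ-subspace of `F` invariant
under all creation operators `v_a` and all annihilation operators `w_a`
(`a ∈ H`) equals `F`. -/
theorem fock_irreducible (p : Submodule ℂ Fock) (hp : p ≠ ⊥)
    (hcr : ∀ (a : ↥HalfInt) (x : Fock), x ∈ p → creation a x ∈ p)
    (han : ∀ (a : ↥HalfInt) (x : Fock), x ∈ p → annihilation a x ∈ p) :
    p = ⊤ := by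
  have hinv : IsCliffordInvariant p := ⟨hcr, han⟩
  obtain ⟨x, hx, hx₀⟩ := Submodule.exists_mem_ne_zero_of_ne_bot hp
  obtain ⟨M, hM⟩ := hinv.exists_single_mem hx hx₀
  rw [eq_top_iff, ← (Finsupp.basisSingleOne : Module.Basis Maya ℂ Fock).span_eq,
    Submodule.span_le, Set.range_subset_iff]
  intro N
  simpa only [Finsupp.coe_basisSingleOne, SetLike.mem_coe] using
    hinv.single_mem_of_single_mem hM N
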